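/- Let f : ℕ → ℕ be strictly increasing and let R : ℕ → ℕ be injective with the property that there is n with f(n) > max of R over {1,...,n}. Then R(ℕ) ⊄ f(ℕ). -/
import Mathlib

theorem image_not_subset (f R : ℕ → ℕ) (hf : StrictMono f) (hR : Function.Injective R)
    (h : ∃ n : ℕ, 1 ≤ n ∧ ∀ m : ℕ, 1 ≤ m → m ≤ n → R m < f n) :
    ¬ (R '' Set.Ici 1 ⊆ f '' Set.Ici 1) := by
  obtain ⟨n, hn1, hlt⟩ := h
  intro hsub
  have hsubset : (Finset.Icc 1 n).image R ⊆ (Finset.Icc 1 (n - 1)).image f := by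
    intro x hx
    simp only [Finset.mem_image, Finset.mem_Icc] at hx ⊢
    obtain ⟨m, ⟨hm1, hmn⟩, rfl⟩ := hx
    obtain ⟨j, hj, hfj⟩ := hsub ⟨m, hm1, rfl⟩
    refine ⟨j, ⟨hj, ?_⟩, hfj⟩
    have : f j < f n := by rw [hfj]; exact hlt m hm1 hmn
    exact Nat.le_sub_one_of_lt (hf.lt_iff_lt.mp this)
  have h1 : ((Finset.Icc 1 n).image R).card = n := by
    rw [Finset.card_image_of_injective _ hR, Nat.card_Icc]
    omega
  have h2 : ((Finset.Icc 1 (n - 1)).image f).card ≤ n - 1 := by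
    calc _ ≤ (Finset.Icc 1 (n - 1)).card := Finset.card_image_le
    _ = n - 1 := by rw [Nat.card_Icc]; omega
  have := Finset.card_le_card hsubset
  omega
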